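/- arXiv:2209.01799 — 3 statements merged into one kernel-verified Lean document; each statement's English description precedes it below -/
import Mathlib

section
/- (Proposition 1, part 3) For every n ≥ 1, any two distinct elements v, w of SA(n) are orthogonal with respect to the Euclidean scalar product on ℝ^(2^n), i.e. ⟨v, w⟩ = 0. -/
noncomputable def Smat (k : ℕ) : Matrix (Fin (2 ^ (k + 1))) (Fin (2 ^ k)) ℝ :=
  Matrix.of fun i j =>
    if (i : ℕ) < 2 ^ k then (if (i : ℕ) = (j : ℕ) then 1 else 0)
    else (if (i : ℕ) + (j : ℕ) = 2 ^ (k + 1) - 1 then 1 else 0)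

noncomputable def Amat (k : ℕ) : Matrix (Fin (2 ^ (k + 1))) (Fin (2 ^ k)) ℝ :=
  Matrix.of fun i j =>
    if (i : ℕ) < 2 ^ k then (if (i : ℕ) = (j : ℕ) then -1 else 0)
    else (if (i : ℕ) + (j : ℕ) = 2 ^ (k + 1) - 1 then 1 else 0)

noncomputable def Fmat (b : Bool) (k : ℕ) : Matrix (Fin (2 ^ (k + 1))) (Fin (2 ^ k)) ℝ :=
  if b then Amat k else Smat k

noncomputable def prodVec : (n : ℕ) → (Fin n → Bool) → (Fin (2 ^ n) → ℝ)
  | 0, _ => fun _ => 1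
  | n + 1, c => (Fmat (c (Fin.last n)) n).mulVec (prodVec n fun i => c i.castSucc)

def SA (n : ℕ) : Set (Fin (2 ^ n) → ℝ) := { v | ∃ c : Fin n → Bool, v = prodVec n c }

/-! The matrix `F = Fmat b k` sends `x` to the vector whose upper half is `±x` (sign `-1`
exactly for `A`) and whose lower half is `x` reversed. Hence `⟪F x, F' y⟫ = (σ σ' + 1) ⟪x, y⟫`
for the signs `σ, σ'` of `F, F'`: this vanishes when the outermost factors differ, and
otherwise distinctness passes to the inner factors, so induction on `n` gives orthogonality. -/

open Matrix

noncomputable def blockSign (b : Bool) : ℝ := if b then -1 else 1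

lemma blockSign_mul_blockSign_add_one_of_ne {b b' : Bool} (h : b ≠ b') :
    blockSign b * blockSign b' + 1 = 0 := by
  cases b <;> cases b' <;> simp_all [blockSign]

lemma Fmat_apply (b : Bool) (k : ℕ) (i : Fin (2 ^ (k + 1))) (j : Fin (2 ^ k)) :
    Fmat b k i j =
      if (i : ℕ) < 2 ^ k then (if (i : ℕ) = j then blockSign b else 0)
      else (if (i : ℕ) + j = 2 ^ (k + 1) - 1 then 1 else 0) := by
  cases b <;> simp [Fmat, Amat, Smat, blockSign]

lemma Fmat_mulVec_castAdd (b : Bool) (k : ℕ) (x : Fin (2 ^ k) → ℝ) (j : Fin (2 ^ k)) :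
    (Fmat b k *ᵥ x) (Fin.cast (Nat.two_pow_succ k).symm (Fin.castAdd _ j)) =
      blockSign b * x j := by
  simp [mulVec, dotProduct, Fmat_apply, Fin.val_eq_val]

lemma Fmat_mulVec_natAdd (b : Bool) (k : ℕ) (x : Fin (2 ^ k) → ℝ) (j : Fin (2 ^ k)) :
    (Fmat b k *ᵥ x) (Fin.cast (Nat.two_pow_succ k).symm (Fin.natAdd _ j)) = x j.rev := by
  have hj := j.isLt
  have hsum : ∀ j' : Fin (2 ^ k), (j : ℕ) + 2 ^ k + j' = 2 ^ (k + 1) - 1 ↔ j' = j.rev := by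
    intro j'
    rw [Fin.ext_iff, Fin.val_rev, Nat.two_pow_succ]
    omega
  simp [mulVec, dotProduct, Fmat_apply, hsum]

lemma Fmat_mulVec_dotProduct (b b' : Bool) (k : ℕ) (x y : Fin (2 ^ k) → ℝ) :
    (Fmat b k *ᵥ x) ⬝ᵥ (Fmat b' k *ᵥ y) =
      (blockSign b * blockSign b' + 1) * (x ⬝ᵥ y) := by
  rw [dotProduct, ← Fin.sum_congr' _ (Nat.two_pow_succ k).symm, Fin.sum_univ_add]
  simp only [Fmat_mulVec_castAdd, Fmat_mulVec_natAdd]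
  have hrev : ∑ j : Fin (2 ^ k), x j.rev * y j.rev = x ⬝ᵥ y :=
    Equiv.sum_comp Fin.revPerm (fun j => x j * y j)
  rw [hrev, add_mul, one_mul, dotProduct, Finset.mul_sum]
  congr 1
  exact Finset.sum_congr rfl fun _ _ => by ring

lemma prodVec_dotProduct_eq_zero_of_ne {n : ℕ} {c c' : Fin n → Bool} (h : c ≠ c') :
    prodVec n c ⬝ᵥ prodVec n c' = 0 := by
  induction n with
  | zero => exact absurd (Subsingleton.elim c c') h
  | succ n ih =>
    rw [prodVec, prodVec, Fmat_mulVec_dotProduct]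
    by_cases hlast : c (Fin.last n) = c' (Fin.last n)
    · have hinit : (fun i : Fin n => c i.castSucc) ≠ (fun i => c' i.castSucc) := fun hinit =>
        h (funext fun i => Fin.lastCases hlast (congrFun hinit) i)
      rw [ih hinit, mul_zero]
    · rw [blockSign_mul_blockSign_add_one_of_ne hlast, zero_mul]

theorem stmt6_general (n : ℕ) (v w : Fin (2 ^ n) → ℝ)
    (hv : v ∈ SA n) (hw : w ∈ SA n) (hvw : v ≠ w) :
    ∑ i, v i * w i = 0 := by
  obtain ⟨c, rfl⟩ := hv
  obtain ⟨c', rfl⟩ := hw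
  exact prodVec_dotProduct_eq_zero_of_ne fun hc => hvw (hc ▸ rfl)

/-- Proposition 1, part 3: distinct elements of SA(n) are orthogonal
with respect to the Euclidean scalar product. -/
theorem stmt6 (n : ℕ) (hn : 1 ≤ n) (v w : Fin (2 ^ n) → ℝ)
    (hv : v ∈ SA n) (hw : w ∈ SA n) (hvw : v ≠ w) :
    ∑ i, v i * w i = 0 :=
  stmt6_general n v w hv hw hvw
end

section
/- (From the proof of Proposition 2) For n ≥ 1, let B_i = F⁽ⁿ⁾F⁽ⁿ⁻¹⁾⋯F⁽¹⁾ with F⁽ⁱ⁾ = A⁽ⁱ⁾ and F⁽ʲ⁾ = S⁽ʲ⁾ for j ≠ i, for i = 1, …, n. Then the n(n+1)/2 vectors consisting of B_1, …, B_n together with the Hadamard products B_i ∘ B_j for 1 ≤ i < j ≤ n are pairwise distinct elements of SA(n). -/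
/-- The i-th column of the matrix B: the product F⁽ⁿ⁾⋯F⁽¹⁾ with F = A exactly in
position i and F = S elsewhere. -/
noncomputable def Bvec (n : ℕ) (i : Fin n) : Fin (2 ^ n) → ℝ :=
  prodVec n (fun l => decide (l = i))

lemma pow_succ_two (k : ℕ) : 2 ^ (k+1) = 2 * 2 ^ k := by ring
lemma fmat_mulVec (b : Bool) (k : ℕ) (v : Fin (2^k) → ℝ) (i : Fin (2^(k+1))) :
    (Fmat b k).mulVec v i =
      if h : (i:ℕ) < 2^k then (if b then -1 else 1) * v ⟨i, h⟩
      else v ⟨2^(k+1) - 1 - i, by have := i.isLt; have := pow_succ_two k; omega⟩ := by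
  have hi := i.isLt
  have h2 := pow_succ_two k
  by_cases h : (i:ℕ) < 2^k
  · rw [dif_pos h]
    have key : ∀ (s : ℝ), (Matrix.of fun (i : Fin (2^(k+1))) (j : Fin (2^k)) =>
        if (i : ℕ) < 2 ^ k then (if (i : ℕ) = (j : ℕ) then s else 0)
        else (if (i : ℕ) + (j : ℕ) = 2 ^ (k + 1) - 1 then (1:ℝ) else 0)).mulVec v i
        = s * v ⟨i, h⟩ := by
      intro s
      unfold Matrix.mulVec dotProduct
      rw [Finset.sum_eq_single (⟨(i:ℕ), h⟩ : Fin (2^k))]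
      · simp [h]
      · intro j _ hj
        simp only [Matrix.of_apply, if_pos h]
        rw [if_neg, zero_mul]
        intro hc
        exact hj (Fin.ext hc.symm)
      · intro hj; exact absurd (Finset.mem_univ _) hj
    cases b <;> simp only [Fmat, Amat, Smat, if_true, if_false, Bool.false_eq_true] <;>
      [skip; skip] <;> first
      | (rw [key (-1)]) | (rw [key 1])
  · rw [dif_neg h]
    have key : (Fmat b k).mulVec v i = v ⟨2^(k+1) - 1 - i, by omega⟩ := by
      have : Fmat b k = Matrix.of fun (i : Fin (2^(k+1))) (j : Fin (2^k)) =>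
        if (i : ℕ) < 2 ^ k then (if (i : ℕ) = (j : ℕ) then (if b then (-1:ℝ) else 1) else 0)
        else (if (i : ℕ) + (j : ℕ) = 2 ^ (k + 1) - 1 then (1:ℝ) else 0) := by
        cases b <;> simp [Fmat, Amat, Smat]
      rw [this]
      unfold Matrix.mulVec dotProduct
      rw [Finset.sum_eq_single (⟨2^(k+1) - 1 - (i:ℕ), by omega⟩ : Fin (2^k))]
      · simp only [Matrix.of_apply, if_neg h]
        rw [if_pos (by show (i:ℕ) + (2^(k+1)-1-(i:ℕ)) = 2^(k+1)-1; omega), one_mul]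
      · intro j _ hj
        simp only [Matrix.of_apply, if_neg h]
        rw [if_neg, zero_mul]
        intro hc
        have hjlt := j.isLt
        apply hj; apply Fin.ext; show (j:ℕ) = 2^(k+1)-1-(i:ℕ); omega
      · intro hj; exact absurd (Finset.mem_univ _) hj
    exact key
lemma sgn_mul (b b' : Bool) :
    ((if b then (-1:ℝ) else 1) * (if b' then (-1:ℝ) else 1)) = (if xor b b' then (-1:ℝ) else 1) := by
  cases b <;> cases b' <;> norm_num
lemma prodVec_mul (n : ℕ) (c c' : Fin n → Bool) :
    prodVec n c * prodVec n c' = prodVec n (fun l => xor (c l) (c' l)) := by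
  induction n with
  | zero => funext i; simp [prodVec]
  | succ n ih =>
    funext i
    have h2 := pow_succ_two n
    have hi := i.isLt
    simp only [prodVec, Pi.mul_apply, fmat_mulVec]
    by_cases h : (i:ℕ) < 2^n
    · rw [dif_pos h, dif_pos h, dif_pos h]
      have := congrFun (ih (fun l => c l.castSucc) (fun l => c' l.castSucc)) ⟨(i:ℕ), h⟩
      simp only [Pi.mul_apply] at this
      rw [← this, ← sgn_mul]
      ring
    · rw [dif_neg h, dif_neg h, dif_neg h]
      have := congrFun (ih (fun l => c l.castSucc) (fun l => c' l.castSucc))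
        ⟨2^(n+1) - 1 - (i:ℕ), by omega⟩
      simp only [Pi.mul_apply] at this
      exact this
noncomputable def idxJ : (n : ℕ) → Fin (2^n)
  | 0 => ⟨0, by norm_num⟩
  | n+1 => ⟨2^(n+1) - 1 - (idxJ n : ℕ), by have := (idxJ n).isLt; have := pow_succ_two n; omega⟩
lemma idxJ_not_lt (n : ℕ) : ¬ ((idxJ (n+1) : ℕ) < 2^n) := by
  have := (idxJ n).isLt; have := pow_succ_two n
  show ¬ (2^(n+1) - 1 - (idxJ n : ℕ) < 2^n)
  omega
lemma prodVec_idxJ (n : ℕ) (c : Fin n → Bool) : prodVec n c (idxJ n) = 1 := by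
  induction n with
  | zero => simp [prodVec]
  | succ n ih =>
    have hJ := (idxJ n).isLt
    have h2 := pow_succ_two n
    simp only [prodVec, fmat_mulVec]
    rw [dif_neg (idxJ_not_lt n)]
    have hnl := idxJ_not_lt n
    have hlt := (idxJ (n+1)).isLt
    have : (⟨2^(n+1) - 1 - (idxJ (n+1) : ℕ), by omega⟩ : Fin (2^n))
        = idxJ n := by
      apply Fin.ext
      show 2^(n+1) - 1 - (idxJ (n+1) : ℕ) = (idxJ n : ℕ)
      show 2^(n+1) - 1 - (2^(n+1) - 1 - (idxJ n : ℕ)) = (idxJ n : ℕ)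
      omega
    rw [this, ih]
lemma prodVec_inj (n : ℕ) : Function.Injective (prodVec n) := by
  induction n with
  | zero => intro c c' _; funext l; exact l.elim0
  | succ n ih =>
    intro c c' h
    have h2 := pow_succ_two n
    have hrest : (fun l : Fin n => c l.castSucc) = (fun l => c' l.castSucc) := by
      apply ih
      funext j
      have hj := j.isLt
      have := congrFun h ⟨2^(n+1) - 1 - (j:ℕ), by omega⟩
      simp only [prodVec, fmat_mulVec] at this
      have hc : ¬ (2^(n+1) - 1 - (j:ℕ) < 2^n) := by omega
      rw [dif_neg hc, dif_neg hc] at this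
      have hidx : (⟨2^(n+1) - 1 - (2^(n+1) - 1 - (j:ℕ)), by omega⟩ : Fin (2^n)) = j :=
        Fin.ext (by show 2^(n+1) - 1 - (2^(n+1) - 1 - (j:ℕ)) = (j:ℕ); omega)
      rwa [hidx] at this
    have hlast : c (Fin.last n) = c' (Fin.last n) := by
      have hJ := (idxJ n).isLt
      have := congrFun h ⟨(idxJ n : ℕ), by omega⟩
      simp only [prodVec, fmat_mulVec] at this
      rw [dif_pos (by show (idxJ n : ℕ) < 2^n; omega), dif_pos (by show (idxJ n : ℕ) < 2^n; omega)] at this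
      have hidx : (⟨(idxJ n : ℕ), hJ⟩ : Fin (2^n)) = idxJ n := Fin.ext rfl
      rw [hidx, hrest, prodVec_idxJ] at this
      rw [mul_one, mul_one] at this
      cases hb : c (Fin.last n) <;> cases hb' : c' (Fin.last n) <;>
        rw [hb, hb'] at this <;> norm_num at this <;> rfl
    funext l
    exact Fin.lastCases hlast (fun i => congrFun hrest i) l
lemma key_form (n : ℕ) (p : Fin n × Fin n) (hp : p.1 ≤ p.2) :
    (if p.1 = p.2 then Bvec n p.1 else Bvec n p.1 * Bvec n p.2) =
      prodVec n (fun l => decide (l = p.1) || decide (l = p.2)) := by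
  by_cases h : p.1 = p.2
  · rw [if_pos h, Bvec]
    have he : (fun l : Fin n => decide (l = p.1)) =
        (fun l => decide (l = p.1) || decide (l = p.2)) := by
      funext l
      rw [h]
      cases hd : decide (l = p.2) <;> simp_all
    rw [he]
  · rw [if_neg h, Bvec, Bvec, prodVec_mul]
    have he : (fun l : Fin n => xor (decide (l = p.1)) (decide (l = p.2))) =
        (fun l => decide (l = p.1) || decide (l = p.2)) := by
      funext l
      by_cases h1 : l = p.1 <;> by_cases h2 : l = p.2 <;> simp_all
    rw [he]

/-- the n(n+1)/2 vectors B_1, …, B_n together with the Hadamard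
products B_i ∘ B_j (i < j) are pairwise distinct elements of SA(n). -/
theorem stmt11 (n : ℕ) (hn : 1 ≤ n) :
    (∀ p : Fin n × Fin n, p.1 ≤ p.2 →
      (if p.1 = p.2 then Bvec n p.1 else Bvec n p.1 * Bvec n p.2) ∈ SA n) ∧
    (∀ p q : Fin n × Fin n, p.1 ≤ p.2 → q.1 ≤ q.2 →
      (if p.1 = p.2 then Bvec n p.1 else Bvec n p.1 * Bvec n p.2) =
      (if q.1 = q.2 then Bvec n q.1 else Bvec n q.1 * Bvec n q.2) → p = q) := by
  constructor
  · intro p hp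
    exact ⟨_, key_form n p hp⟩
  · intro p q hp hq heq
    rw [key_form n p hp, key_form n q hq] at heq
    have hc := prodVec_inj n heq
    have ev : ∀ l : Fin n, ((l = p.1) ∨ (l = p.2)) ↔ ((l = q.1) ∨ (l = q.2)) := by
      intro l
      have hb := congrFun hc l
      have h' : ((decide (l = p.1) || decide (l = p.2)) = true) ↔
          ((decide (l = q.1) || decide (l = q.2)) = true) := by rw [hb]
      simpa only [Bool.or_eq_true, decide_eq_true_eq] using h'
    have e1 := (ev p.1).mp (Or.inl rfl)
    have e2 := (ev p.2).mp (Or.inr rfl)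
    have e3 := (ev q.1).mpr (Or.inl rfl)
    have e4 := (ev q.2).mpr (Or.inr rfl)
    have hp' : (p.1 : ℕ) ≤ (p.2 : ℕ) := hp
    have hq' : (q.1 : ℕ) ≤ (q.2 : ℕ) := hq
    have v1 : (p.1 : ℕ) = q.1 ∨ (p.1 : ℕ) = q.2 := by
      rcases e1 with h | h <;> [left; right] <;> exact congrArg Fin.val h
    have v2 : (p.2 : ℕ) = q.1 ∨ (p.2 : ℕ) = q.2 := by
      rcases e2 with h | h <;> [left; right] <;> exact congrArg Fin.val h
    have v3 : (q.1 : ℕ) = p.1 ∨ (q.1 : ℕ) = p.2 := by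
      rcases e3 with h | h <;> [left; right] <;> exact congrArg Fin.val h
    have v4 : (q.2 : ℕ) = p.1 ∨ (q.2 : ℕ) = p.2 := by
      rcases e4 with h | h <;> [left; right] <;> exact congrArg Fin.val h
    have : (p.1 : ℕ) = q.1 ∧ (p.2 : ℕ) = q.2 := by omega
    exact Prod.ext (Fin.ext this.1) (Fin.ext this.2)
end

section
/- (Proposition 2) For every n ≥ 1 there exists a bijection g from {1, …, 2^n} onto {−1, 1}^n such that for every pair (k, l) with 1 ≤ k ≤ l ≤ n, the 2^n-component vector whose j-th entry is m(g(j))_{kl} (equal to g(j)_k if k = l, and to g(j)_k · g(j)_l if k < l) belongs to SA(n). Equivalently, after reordering its columns by g, every row of the matrix M is the transpose of an element of SA(n). -/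
open Matrix

/-! The bijection is built by induction on `n`. Given `g` for `n`, let the first half of
`Fin (2 ^ (n + 1))` run through `g` with new last coordinate `-1`, and the second half run through
`g` in reverse order with new last coordinate `1`. Every row of the new matrix `M` is then `S`
applied to an old row (rows not involving the new coordinate), or `A` applied to an old diagonal
row or to the all-ones vector (rows involving it); and the all-ones vector is `S ⋯ S`. -/

def foldIdx (n : ℕ) (j : Fin (2 ^ (n + 1))) : Fin (2 ^ n) :=
  if h : (j : ℕ) < 2 ^ n then ⟨j, h⟩
  else ⟨2 ^ (n + 1) - 1 - j, by have := j.isLt; rw [pow_succ] at *; omega⟩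

def halfSign (n : ℕ) (j : Fin (2 ^ (n + 1))) : ℝ :=
  if (j : ℕ) < 2 ^ n then -1 else 1

lemma halfSign_eq_neg_one_or_one {n : ℕ} (j : Fin (2 ^ (n + 1))) :
    halfSign n j = -1 ∨ halfSign n j = 1 := by
  unfold halfSign
  split_ifs <;> simp

lemma eq_of_foldIdx_eq_of_halfSign_eq {n : ℕ} {a b : Fin (2 ^ (n + 1))}
    (hfold : foldIdx n a = foldIdx n b) (hsign : halfSign n a = halfSign n b) : a = b := by
  have := a.isLt
  have := b.isLt
  unfold foldIdx at hfold
  unfold halfSign at hsign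
  split_ifs at hfold hsign with ha hb hb
  · simpa [Fin.ext_iff] using hfold
  · norm_num at hsign
  · norm_num at hsign
  · simp only [Fin.ext_iff] at hfold ⊢
    omega

lemma exists_foldIdx_eq_halfSign_eq {n : ℕ} (a : Fin (2 ^ n)) {s : ℝ} (hs : s = -1 ∨ s = 1) :
    ∃ j, foldIdx n j = a ∧ halfSign n j = s := by
  have := a.isLt
  have hpow : 2 ^ (n + 1) = 2 ^ n + 2 ^ n := by ring
  rcases hs with rfl | rfl
  · exact ⟨⟨a, by omega⟩, by simp [foldIdx, halfSign]⟩
  · have hge : ¬ 2 ^ (n + 1) - 1 - (a : ℕ) < 2 ^ n := by omega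
    refine ⟨⟨2 ^ (n + 1) - 1 - a, by omega⟩, ?_, by simp [halfSign, hge]⟩
    simp only [foldIdx, dif_neg hge, Fin.ext_iff]
    omega

lemma Smat_apply (k : ℕ) (i : Fin (2 ^ (k + 1))) (j : Fin (2 ^ k)) :
    Smat k i j = if foldIdx k i = j then 1 else 0 := by
  have := j.isLt
  simp only [Smat, Matrix.of_apply, foldIdx, Fin.ext_iff]
  split_ifs <;> simp_all <;> omega

lemma Amat_apply (k : ℕ) (i : Fin (2 ^ (k + 1))) (j : Fin (2 ^ k)) :
    Amat k i j = if foldIdx k i = j then halfSign k i else 0 := by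
  have := j.isLt
  simp only [Amat, Matrix.of_apply, foldIdx, halfSign, Fin.ext_iff]
  split_ifs <;> simp_all <;> omega

lemma Smat_mulVec_apply (k : ℕ) (v : Fin (2 ^ k) → ℝ) (i : Fin (2 ^ (k + 1))) :
    (Smat k *ᵥ v) i = v (foldIdx k i) := by
  simp [Matrix.mulVec, dotProduct, Smat_apply]

lemma Amat_mulVec_apply (k : ℕ) (v : Fin (2 ^ k) → ℝ) (i : Fin (2 ^ (k + 1))) :
    (Amat k *ᵥ v) i = halfSign k i * v (foldIdx k i) := by
  simp [Matrix.mulVec, dotProduct, Amat_apply, ite_mul]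

lemma Fmat_mulVec_mem_SA {n : ℕ} (b : Bool) {w : Fin (2 ^ n) → ℝ} (hw : w ∈ SA n) :
    Fmat b n *ᵥ w ∈ SA (n + 1) := by
  obtain ⟨c, rfl⟩ := hw
  exact ⟨Fin.snoc c b, by simp [prodVec]⟩

lemma Smat_mulVec_mem_SA {n : ℕ} {w : Fin (2 ^ n) → ℝ} (hw : w ∈ SA n) :
    Smat n *ᵥ w ∈ SA (n + 1) :=
  Fmat_mulVec_mem_SA false hw

lemma Amat_mulVec_mem_SA {n : ℕ} {w : Fin (2 ^ n) → ℝ} (hw : w ∈ SA n) :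
    Amat n *ᵥ w ∈ SA (n + 1) :=
  Fmat_mulVec_mem_SA true hw

lemma one_mem_SA (n : ℕ) : (1 : Fin (2 ^ n) → ℝ) ∈ SA n := by
  induction n with
  | zero => exact ⟨Fin.elim0, rfl⟩
  | succ n ih =>
    convert Smat_mulVec_mem_SA ih
    ext i
    simp [Smat_mulVec_apply]

def signVec : (n : ℕ) → Fin (2 ^ n) → Fin n → ℝ
  | 0, _ => Fin.elim0
  | n + 1, j => Fin.snoc (signVec n (foldIdx n j)) (halfSign n j)

lemma signVec_succ_castSucc {n : ℕ} (j : Fin (2 ^ (n + 1))) (i : Fin n) :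
    signVec (n + 1) j i.castSucc = signVec n (foldIdx n j) i := by
  simp [signVec]

lemma signVec_succ_last {n : ℕ} (j : Fin (2 ^ (n + 1))) :
    signVec (n + 1) j (Fin.last n) = halfSign n j := by
  simp [signVec]

lemma signVec_injective (n : ℕ) : Function.Injective (signVec n) := by
  induction n with
  | zero => exact fun a b _ => Subsingleton.elim (α := Fin 1) a b
  | succ n ih =>
    intro a b hab
    obtain ⟨hfold, hsign⟩ := Fin.snoc_inj.mp hab
    exact eq_of_foldIdx_eq_of_halfSign_eq (ih hfold) hsign

lemma range_signVec (n : ℕ) :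
    Set.range (signVec n) = {z : Fin n → ℝ | ∀ i, z i = -1 ∨ z i = 1} := by
  induction n with
  | zero => exact Set.ext fun z => by simp [Subsingleton.elim z (signVec 0 0)]
  | succ n ih =>
    ext z
    constructor
    · rintro ⟨j, rfl⟩ i
      induction i using Fin.lastCases with
      | last => rw [signVec_succ_last]; exact halfSign_eq_neg_one_or_one j
      | cast i => rw [signVec_succ_castSucc]; exact (ih ▸ Set.mem_range_self _ :) i
    · intro hz
      obtain ⟨a, ha⟩ : Fin.init z ∈ Set.range (signVec n) := ih ▸ fun i => hz i.castSucc
      obtain ⟨j, hfold, hsign⟩ := exists_foldIdx_eq_halfSign_eq a (hz (Fin.last n))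
      refine ⟨j, ?_⟩
      rw [← Fin.snoc_init_self z, ← ha, ← hfold, ← hsign]
      rfl

lemma signVec_row_mem_SA (n : ℕ) (k l : Fin n) :
    (fun j => if k = l then signVec n j k else signVec n j k * signVec n j l) ∈ SA n := by
  induction n with
  | zero => exact k.elim0
  | succ n ih =>
    have mul_last_mem : ∀ i : Fin n,
        (fun j => signVec (n + 1) j i.castSucc * signVec (n + 1) j (Fin.last n)) ∈ SA (n + 1) := by
      intro i
      convert Amat_mulVec_mem_SA (by simpa using ih i i) using 1
      ext j
      simp [Amat_mulVec_apply, signVec_succ_castSucc, signVec_succ_last, mul_comm]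
    induction k using Fin.lastCases with
    | last =>
      induction l using Fin.lastCases with
      | last =>
        convert Amat_mulVec_mem_SA (one_mem_SA n) using 1
        ext j
        simp [Amat_mulVec_apply, signVec_succ_last]
      | cast l =>
        convert mul_last_mem l using 1
        ext j
        simp [(Fin.castSucc_lt_last l).ne', mul_comm]
    | cast k =>
      induction l using Fin.lastCases with
      | last =>
        convert mul_last_mem k using 1
        ext j
        simp
      | cast l =>
        convert Smat_mulVec_mem_SA (ih k l) using 1
        ext j
        simp [Smat_mulVec_apply, signVec_succ_castSucc]

theorem stmt12_general (n : ℕ) :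
    ∃ g : Fin (2 ^ n) → (Fin n → ℝ),
      Function.Injective g ∧
      Set.range g = {z : Fin n → ℝ | ∀ i, z i = -1 ∨ z i = 1} ∧
      ∀ k l : Fin n, k ≤ l →
        (fun j => if k = l then g j k else g j k * g j l) ∈ SA n :=
  ⟨signVec n, signVec_injective n, range_signVec n, fun k l _ => signVec_row_mem_SA n k l⟩

/-- Proposition 2: there is a bijection g from {1,…,2^n} onto
{−1,1}^n such that for every pair k ≤ l the vector j ↦ m(g(j))_{kl} (equal to
g(j)_k if k = l and to g(j)_k · g(j)_l if k < l) belongs to SA(n); i.e. after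
reordering columns by g, every row of M is the transpose of an element of SA(n). -/
theorem stmt12 (n : ℕ) (hn : 1 ≤ n) :
    ∃ g : Fin (2 ^ n) → (Fin n → ℝ),
      Function.Injective g ∧
      Set.range g = {z : Fin n → ℝ | ∀ i, z i = -1 ∨ z i = 1} ∧
      ∀ k l : Fin n, k ≤ l →
        (fun j => if k = l then g j k else g j k * g j l) ∈ SA n :=
  stmt12_general n
end
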